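/- Let A = (a_1, …, a_k) be a nonempty multiset of integers with each a_i ≥ 2 such that c(A) = Σ_i (a_i − 1) is odd (so that elements of C(A) are odd permutations). Let T be a subset of the extended conjugacy class C(A) in S_n that is semi-connected ({1, …, n} is a single orbit under ⟨T⟩), split (the supports of any two distinct elements of T intersect in at most one point), and balanced. Then T generates S_n. -/

import Mathlib

/-!
Every orbit of some `g ∈ T` meets an orbit of another `h ∈ T`, and by splitness the supports of
`g` and `h` then meet in a single point `w`, so `⁅g, h⁆` is the 3-cycle `(w, g w, h w)`.
Conjugating by a power of `g` gives, for every point `u` moved by `g`, a 3-cycle `(u, g u, v)` in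
`G = ⟨T⟩`. Two sets of size at least three on which `G` contains all 3-cycles, if they meet, have
the same property on their union. So a maximal such set `Δ` absorbs every triple `{u, g u, v}`
with `u ∈ Δ`, which makes it `T`-invariant; by transitivity `Δ` is everything and `G ≥ Aₙ`.
Elements of `C(A)` are odd, hence `G = Sₙ`.
-/

open Equiv Equiv.Perm Finset Subgroup
open scoped commutatorElement Pointwise

theorem commutatorElement_mem {G : Type*} [Group G] {H : Subgroup G} {g h : G} (hg : g ∈ H)
    (hh : h ∈ H) : ⁅g, h⁆ ∈ H :=
  commutatorElement_def g h ▸ H.mul_mem (H.mul_mem (H.mul_mem hg hh) (H.inv_mem hg)) (H.inv_mem hh)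

section ThreeCycle

variable {α : Type*} [DecidableEq α] {a b c x : α}

/-- The 3-cycle `a ↦ b ↦ c ↦ a` when `a`, `b`, `c` are distinct. -/
def threeCycle (a b c : α) : Perm α := swap a b * swap b c

theorem threeCycle_apply (hab : a ≠ b) (hac : a ≠ c) (hbc : b ≠ c) (y : α) :
    threeCycle a b c y = if y = a then b else if y = b then c else if y = c then a else y := by
  simp only [threeCycle, Perm.mul_apply, swap_apply_def]
  split_ifs <;> grind

theorem threeCycle_rotate (hab : a ≠ b) (hac : a ≠ c) (hbc : b ≠ c) :
    threeCycle a b c = threeCycle b c a := by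
  ext y
  simp only [threeCycle_apply hab hac hbc, threeCycle_apply hbc hab.symm hac.symm]
  split_ifs <;> grind

theorem inv_threeCycle (hab : a ≠ b) (hac : a ≠ c) (hbc : b ≠ c) :
    (threeCycle a b c)⁻¹ = threeCycle a c b := by
  rw [inv_eq_iff_eq_inv, eq_comm, inv_eq_iff_mul_eq_one]
  ext y
  simp only [Perm.mul_apply, threeCycle_apply hab hac hbc, threeCycle_apply hac hab hbc.symm,
    Perm.one_apply]
  split_ifs <;> grind

theorem threeCycle_eq_mul_of_ne (hxa : x ≠ a) (hxb : x ≠ b) (hxc : x ≠ c)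
    (hab : a ≠ b) (hac : a ≠ c) (hbc : b ≠ c) :
    threeCycle a b c = threeCycle x a b * threeCycle x b c := by
  ext y
  simp only [Perm.mul_apply, threeCycle_apply hab hac hbc, threeCycle_apply hxa hxb hab,
    threeCycle_apply hxb hxc hbc]
  split_ifs <;> grind

theorem threeCycle_eq_mul_of_ne' (hxa : x ≠ a) (hxb : x ≠ b) (hxc : x ≠ c)
    (hab : a ≠ b) (hac : a ≠ c) (hbc : b ≠ c) :
    threeCycle x a b = threeCycle x c b * threeCycle x a c := by
  ext y
  simp only [Perm.mul_apply, threeCycle_apply hxa hxb hab, threeCycle_apply hxc hxb hbc.symm,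
    threeCycle_apply hxa hxc hac]
  split_ifs <;> grind

theorem conj_threeCycle (f : Perm α) (a b c : α) :
    f * threeCycle a b c * f⁻¹ = threeCycle (f a) (f b) (f c) := by
  simp only [threeCycle, swap_apply_apply]
  group

variable [Fintype α]

theorem Equiv.Perm.IsThreeCycle.eq_threeCycle {σ : Perm α} (hσ : σ.IsThreeCycle)
    (ha : a ∈ σ.support) :
    σ = threeCycle a (σ a) (σ (σ a)) :=
  hσ.eq_swap_mul_swap_iff_mem_support.2 ha

theorem support_threeCycle (hab : a ≠ b) (hac : a ≠ c) (hbc : b ≠ c) :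
    (threeCycle a b c).support = {a, b, c} := by
  ext y
  simp only [mem_support, threeCycle_apply hab hac hbc, mem_insert, mem_singleton]
  split_ifs <;> grind

theorem apply_ne_apply_of_support_inter_eq_singleton {g h : Perm α}
    (hx : g.support ∩ h.support = {x}) : g x ≠ h x := by
  obtain ⟨hx, hgh⟩ := eq_singleton_iff_unique_mem.1 hx
  simp only [mem_inter, mem_support] at hx hgh
  have := hgh (h x)
  grind [Equiv.apply_eq_iff_eq]

theorem commutatorElement_eq_threeCycle {g h : Perm α} (hx : g.support ∩ h.support = {x}) :
    ⁅g, h⁆ = threeCycle x (g x) (h x) := by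
  have hne := apply_ne_apply_of_support_inter_eq_singleton hx
  obtain ⟨hx, hgh⟩ := eq_singleton_iff_unique_mem.1 hx
  simp only [mem_inter, mem_support] at hx hgh
  obtain ⟨hgx, hhx⟩ := hx
  suffices g * h = threeCycle x (g x) (h x) * (h * g) by
    rw [commutatorElement_def, this]; group
  ext y
  simp only [Perm.mul_apply, threeCycle_apply hgx.symm hhx.symm hne]
  have := hgh y
  have := hgh (g y)
  have := hgh (h y)
  grind [Equiv.apply_eq_iff_eq]

end ThreeCycle

section ContainsThreeCyclesOn

variable {α : Type*} [DecidableEq α] {G : Subgroup (Perm α)} {a b c x : α} {B B₁ B₂ : Finset α}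

def ContainsThreeCyclesOn (G : Subgroup (Perm α)) (B : Finset α) : Prop :=
  ∀ a ∈ B, ∀ b ∈ B, ∀ c ∈ B, a ≠ b → a ≠ c → b ≠ c → threeCycle a b c ∈ G

theorem containsThreeCyclesOn_triple (hab : a ≠ b) (hac : a ≠ c) (hbc : b ≠ c)
    (h : threeCycle a b c ∈ G) : ContainsThreeCyclesOn G {a, b, c} := by
  have h₂ : threeCycle b c a ∈ G := threeCycle_rotate hab hac hbc ▸ h
  have h₃ : threeCycle c a b ∈ G := threeCycle_rotate hbc hab.symm hac.symm ▸ h₂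
  have h₄ : threeCycle a c b ∈ G := inv_threeCycle hab hac hbc ▸ G.inv_mem h
  have h₅ : threeCycle c b a ∈ G := threeCycle_rotate hac hab hbc.symm ▸ h₄
  have h₆ : threeCycle b a c ∈ G := threeCycle_rotate hbc.symm hac.symm hab.symm ▸ h₅
  intro p hp q hq r hr hpq hpr hqr
  simp only [mem_insert, mem_singleton] at hp hq hr
  rcases hp with rfl | rfl | rfl <;> rcases hq with rfl | rfl | rfl <;>
    rcases hr with rfl | rfl | rfl <;> first | contradiction | assumption

theorem ContainsThreeCyclesOn.of_forall_threeCycle_mem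
    (h : ∀ a ∈ B, ∀ b ∈ B, x ≠ a → x ≠ b → a ≠ b → threeCycle x a b ∈ G) :
    ContainsThreeCyclesOn G B := by
  intro a ha b hb c hc hab hac hbc
  by_cases hxa : x = a
  · subst hxa; exact h b hb c hc hab hac hbc
  by_cases hxb : x = b
  · subst hxb
    rw [threeCycle_rotate hab hac hbc]
    exact h c hc a ha hbc hab.symm hac.symm
  by_cases hxc : x = c
  · subst hxc
    rw [threeCycle_rotate hab hac hbc, threeCycle_rotate hbc hab.symm hac.symm]
    exact h a ha b hb hxa hxb hab
  rw [threeCycle_eq_mul_of_ne hxa hxb hxc hab hac hbc]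
  exact G.mul_mem (h a ha b hb hxa hxb hab) (h b hb c hc hxb hxc hbc)

theorem threeCycle_mem_of_mem_sdiff [Fintype α] (h₁ : ContainsThreeCyclesOn G B₁)
    (h₂ : ContainsThreeCyclesOn G B₂) (hc₁ : 3 ≤ #B₁) (hc₂ : 3 ≤ #B₂)
    (hx : x ∈ B₁ ∩ B₂) (ha : a ∈ B₁ \ B₂) (hb : b ∈ B₂ \ B₁) (hxa : x ≠ a) (hxb : x ≠ b) :
    threeCycle x a b ∈ G := by
  rw [mem_inter] at hx
  rw [mem_sdiff] at ha hb
  have hab : a ≠ b := fun h => hb.2 (h ▸ ha.1)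
  obtain ⟨c, hc, hcxa⟩ :=
    exists_mem_notMem_of_card_lt_card ((card_le_two (a := x) (b := a)).trans_lt hc₁)
  simp only [mem_insert, mem_singleton, not_or] at hcxa
  have hxc : x ≠ c := Ne.symm hcxa.1
  have hac : a ≠ c := Ne.symm hcxa.2
  have hcb : c ≠ b := fun h => hb.2 (h ▸ hc)
  have hxac := h₁ x hx.1 a ha.1 c hc hxa hxc hac
  by_cases hc₂' : c ∈ B₂
  · rw [threeCycle_eq_mul_of_ne' hxa hxb hxc hab hac hcb.symm]
    exact G.mul_mem (h₂ x hx.2 c hc₂' b hb.1 hxc hxb hcb) hxac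
  · -- otherwise `(x a c)` and `(x b d)` overlap only in `x`, and their commutator is `(x a b)`
    obtain ⟨d, hd, hdxb⟩ :=
      exists_mem_notMem_of_card_lt_card ((card_le_two (a := x) (b := b)).trans_lt hc₂)
    simp only [mem_insert, mem_singleton, not_or] at hdxb
    have hxd : x ≠ d := Ne.symm hdxb.1
    have hbd : b ≠ d := Ne.symm hdxb.2
    have hxbd := h₂ x hx.2 b hb.1 d hd hxb hxd hbd
    have hsupp : (threeCycle x a c).support ∩ (threeCycle x b d).support = {x} := by
      rw [support_threeCycle hxa hxc hac, support_threeCycle hxb hxd hbd]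
      ext y
      simp only [mem_inter, mem_insert, mem_singleton]
      grind
    have := commutatorElement_eq_threeCycle hsupp
    rw [threeCycle_apply hxa hxc hac, threeCycle_apply hxb hxd hbd, if_pos rfl, if_pos rfl] at this
    rw [← this]
    exact commutatorElement_mem hxac hxbd

theorem ContainsThreeCyclesOn.union [Fintype α] (h₁ : ContainsThreeCyclesOn G B₁)
    (h₂ : ContainsThreeCyclesOn G B₂) (hc₁ : 3 ≤ #B₁) (hc₂ : 3 ≤ #B₂) (hx : x ∈ B₁ ∩ B₂) :
    ContainsThreeCyclesOn G (B₁ ∪ B₂) := by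
  refine .of_forall_threeCycle_mem (x := x) fun a ha b hb hxa hxb hab => ?_
  have hx' := mem_inter.1 hx
  rw [mem_union] at ha hb
  by_cases ha₁ : a ∈ B₁ <;> by_cases ha₂ : a ∈ B₂ <;> by_cases hb₁ : b ∈ B₁ <;>
    by_cases hb₂ : b ∈ B₂
  all_goals first
    | exact h₁ x hx'.1 a ha₁ b hb₁ hxa hxb hab
    | exact h₂ x hx'.2 a ha₂ b hb₂ hxa hxb hab
    | exact threeCycle_mem_of_mem_sdiff h₁ h₂ hc₁ hc₂ hx (mem_sdiff.2 ⟨ha₁, ha₂⟩)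
        (mem_sdiff.2 ⟨hb₂, hb₁⟩) hxa hxb
    | (rw [← inv_threeCycle hxb hxa hab.symm]
       exact G.inv_mem (threeCycle_mem_of_mem_sdiff h₁ h₂ hc₁ hc₂ hx (mem_sdiff.2 ⟨hb₁, hb₂⟩)
        (mem_sdiff.2 ⟨ha₂, ha₁⟩) hxb hxa))
    | tauto

theorem alternatingGroup_le_of_containsThreeCyclesOn_univ [Fintype α]
    (h : ContainsThreeCyclesOn G univ) : alternatingGroup α ≤ G := by
  rw [← closure_three_cycles_eq_alternating, closure_le]
  intro σ (hσ : σ.IsThreeCycle)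
  obtain ⟨a, ha⟩ := card_pos.1 (hσ.card_support ▸ three_pos)
  have hnd := (hσ.nodup_iff_mem_support (a := a)).2 ha
  simp only [List.nodup_cons, List.mem_cons, List.not_mem_nil] at hnd
  rw [hσ.eq_threeCycle ha]
  exact h _ (mem_univ _) _ (mem_univ _) _ (mem_univ _) (by tauto) (by tauto) (by tauto)

end ContainsThreeCyclesOn

theorem exists_containsThreeCyclesOn_triple {α : Type*} [DecidableEq α] [Fintype α]
    {G : Subgroup (Perm α)} {g h : Perm α} {u w : α} (hg : g ∈ G) (hh : h ∈ G)
    (huw : g.SameCycle u w) (hw : g.support ∩ h.support = {w}) :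
    ∃ v, 3 ≤ #{u, g u, v} ∧ ContainsThreeCyclesOn G {u, g u, v} := by
  obtain ⟨i, rfl⟩ := huw
  set γ := g ^ i
  have hne := apply_ne_apply_of_support_inter_eq_singleton hw
  have hγg : γ⁻¹ (g (γ u)) = g u := by
    have : γ⁻¹ * g * γ = g := by simp only [γ]; group
    exact congrArg (· u) this
  -- conjugating the commutator by `γ⁻¹` moves the 3-cycle from `w = γ u` to `u`
  have hmem : threeCycle u (g u) (γ⁻¹ (h (γ u))) ∈ G := by
    have := conj_threeCycle γ⁻¹ (γ u) (g (γ u)) (h (γ u))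
    rw [hγg, show γ⁻¹ (γ u) = u from γ.symm_apply_apply u, inv_inv,
      ← commutatorElement_eq_threeCycle hw] at this
    rw [← this]
    exact G.mul_mem (G.mul_mem (G.inv_mem (G.zpow_mem hg i)) (commutatorElement_mem hg hh))
      (G.zpow_mem hg i)
  obtain ⟨hgw, hhw⟩ := mem_inter.1 (eq_singleton_iff_unique_mem.1 hw).1
  rw [mem_support] at hgw hhw
  have hγu : γ⁻¹ (γ u) = u := γ.symm_apply_apply u
  have hinj : ∀ {p q}, p ≠ q → γ⁻¹ p ≠ γ⁻¹ q := fun hpq e => hpq (γ⁻¹.injective e)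
  have h₁ : u ≠ g u := by simpa only [hγu, hγg] using hinj hgw.symm
  have h₂ : u ≠ γ⁻¹ (h (γ u)) := by simpa only [hγu] using hinj hhw.symm
  have h₃ : g u ≠ γ⁻¹ (h (γ u)) := by simpa only [hγg] using hinj hne
  exact ⟨_, (card_eq_three.2 ⟨_, _, _, h₁, h₂, h₃, rfl⟩).ge,
    containsThreeCyclesOn_triple h₁ h₂ h₃ hmem⟩

section Orbits

variable {α : Type*} [DecidableEq α] [Fintype α]

/-- The orbits of the elements of `T` in the paper's sense. -/
def cycleSupports (T : Set (Perm α)) : Set (Finset α) :=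
  {O | ∃ g ∈ T, ∃ x, g x ≠ x ∧ O = (g.cycleOf x).support}

theorem exists_support_inter_eq_singleton {T : Set (Perm α)}
    (hsplit : ∀ g ∈ T, ∀ h ∈ T, g ≠ h → #(g.support ∩ h.support) ≤ 1)
    (hmeet : ∀ O ∈ cycleSupports T, ∃ O' ∈ cycleSupports T, O' ≠ O ∧ (O ∩ O').Nonempty)
    {g : Perm α} (hg : g ∈ T) {u : α} (hu : g u ≠ u) :
    ∃ h ∈ T, ∃ w, g.SameCycle u w ∧ g.support ∩ h.support = {w} := by
  obtain ⟨_, ⟨h, hh, y, hy, rfl⟩, hne, w, hw⟩ := hmeet _ ⟨g, hg, u, hu, rfl⟩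
  rw [mem_inter, mem_support_cycleOf_iff, mem_support_cycleOf_iff] at hw
  obtain ⟨⟨huw, hu⟩, hyw, hy⟩ := hw
  have hgh : g ≠ h := by
    rintro rfl
    exact hne (by rw [(hyw.trans huw.symm).cycleOf_eq])
  have hw : w ∈ g.support ∩ h.support :=
    mem_inter.2 ⟨support_cycleOf_le g u (mem_support_cycleOf_iff.2 ⟨huw, hu⟩),
      support_cycleOf_le h y (mem_support_cycleOf_iff.2 ⟨hyw, hy⟩)⟩
  exact ⟨h, hh, w, huw, eq_singleton_iff_unique_mem.2
    ⟨hw, fun z hz => card_le_one.1 (hsplit g hg h hh hgh) z hz w hw⟩⟩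

end Orbits

theorem apply_mem_of_mem_closure {α : Type*} [DecidableEq α] {T : Set (Perm α)} {Δ : Finset α}
    (hT : ∀ g ∈ T, ∀ u ∈ Δ, g u ∈ Δ) {g : Perm α} (hg : g ∈ closure T) {u : α} (hu : u ∈ Δ) :
    g u ∈ Δ := by
  have : closure T ≤ MulAction.stabilizer (Perm α) Δ := by
    refine (closure_le _).2 fun g hg => ?_
    rw [SetLike.mem_coe, MulAction.mem_stabilizer_iff, smul_finset_def]
    exact eq_of_subset_of_card_le (image_subset_iff.2 (hT g hg))
      (card_image_of_injective _ g.injective).ge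
  rw [← MulAction.mem_stabilizer_iff.1 (this hg)]
  exact smul_mem_smul_finset hu

theorem sign_eq_neg_one_of_odd {α : Type*} [DecidableEq α] [Fintype α] {σ : Perm α}
    (h : Odd (σ.cycleType.sum - Multiset.card σ.cycleType)) : sign σ = -1 := by
  have : Multiset.card σ.cycleType ≤ σ.cycleType.sum := by
    simpa using Multiset.card_nsmul_le_sum (s := σ.cycleType) (a := 1)
      fun _ hn => one_le_two.trans (two_le_of_mem_cycleType hn)
  rw [sign_of_cycleType]
  obtain ⟨k, hk⟩ := h
  exact Odd.neg_one_pow ⟨k + Multiset.card σ.cycleType, by omega⟩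

theorem eq_top_of_alternatingGroup_le {α : Type*} [DecidableEq α] [Fintype α]
    {H : Subgroup (Perm α)} (hA : alternatingGroup α ≤ H) {g : Perm α} (hg : g ∈ H)
    (hsign : sign g = -1) : H = ⊤ := by
  refine eq_top_iff.2 fun σ _ => ?_
  rcases Int.units_eq_one_or (sign σ) with hσ | hσ
  · exact hA (mem_alternatingGroup.2 hσ)
  · have : σ * g⁻¹ ∈ alternatingGroup α := by simp [mem_alternatingGroup, hσ, hsign]
    simpa using H.mul_mem (hA this) hg

theorem alternatingGroup_le_closure {α : Type*} [DecidableEq α] [Fintype α]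
    {T : Set (Perm α)} (htrans : ∀ x y, ∃ g ∈ closure T, g x = y)
    (hpartner : ∀ g ∈ T, ∀ u, g u ≠ u →
      ∃ h ∈ T, ∃ w, g.SameCycle u w ∧ g.support ∩ h.support = {w})
    {g₀ : Perm α} (hg₀ : g₀ ∈ T) (hg₀_ne : g₀ ≠ 1) : alternatingGroup α ≤ closure T := by
  have htriple : ∀ g ∈ T, ∀ u, g u ≠ u →
      ∃ v, 3 ≤ #{u, g u, v} ∧ ContainsThreeCyclesOn (closure T) {u, g u, v} := by
    intro g hg u hu
    obtain ⟨h, hh, w, huw, hw⟩ := hpartner g hg u hu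
    exact exists_containsThreeCyclesOn_triple (subset_closure hg) (subset_closure hh) huw hw
  obtain ⟨u₀, hu₀⟩ : ∃ u, g₀ u ≠ u := by
    by_contra! h
    exact hg₀_ne (Equiv.ext h)
  obtain ⟨v₀, hB₀⟩ := htriple g₀ hg₀ u₀ hu₀
  obtain ⟨Δ, ⟨hΔ3, hΔ⟩, hmax⟩ :=
    (Set.toFinite {B : Finset α | 3 ≤ #B ∧ ContainsThreeCyclesOn (closure T) B}).exists_maximal
      ⟨_, hB₀⟩
  have hstable : ∀ g ∈ T, ∀ u ∈ Δ, g u ∈ Δ := by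
    intro g hg u hu
    by_cases hgu : g u = u
    · rwa [hgu]
    obtain ⟨v, hcard, hv⟩ := htriple g hg u hgu
    have hunion : Δ ∪ {u, g u, v} ⊆ Δ :=
      hmax ⟨hΔ3.trans (card_le_card subset_union_left),
        hΔ.union hv hΔ3 hcard (mem_inter.2 ⟨hu, mem_insert_self _ _⟩)⟩ subset_union_left
    exact hunion (by simp)
  have huniv : Δ = univ := by
    obtain ⟨x, hx⟩ := card_pos.1 (three_pos.trans_le hΔ3)
    refine eq_univ_of_forall fun y => ?_
    obtain ⟨g, hg, rfl⟩ := htrans x y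
    exact apply_mem_of_mem_closure hstable hg hx
  exact alternatingGroup_le_of_containsThreeCyclesOn_univ (huniv ▸ hΔ)

theorem stmt_11_general (n : ℕ) (A : Multiset ℕ)
    (hodd : Odd (A.sum - Multiset.card A))
    (T : Set (Equiv.Perm (Fin n)))
    (htype : ∀ g ∈ T, g.cycleType = A)
    (hconn : ∀ x y : Fin n, ∃ g ∈ Subgroup.closure T, g x = y)
    (hsplit : ∀ g ∈ T, ∀ h ∈ T, g ≠ h → (g.support ∩ h.support).card ≤ 1)
    (hbalanced : ∃ P : Fin (Multiset.card A) → Set (Finset (Fin n)),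
      (∀ i j, i ≠ j → Disjoint (P i) (P j)) ∧
      (⋃ i, P i) = {O : Finset (Fin n) | ∃ g ∈ T, ∃ x : Fin n,
          g x ≠ x ∧ O = (g.cycleOf x).support} ∧
      (∀ i, ∃ s : ℕ, ∀ O ∈ P i, O.card = s) ∧
      (∀ i, ∀ O ∈ P i, ∃ O' ∈ P i, O' ≠ O ∧ (O ∩ O').Nonempty)) :
    Subgroup.closure T = (⊤ : Subgroup (Equiv.Perm (Fin n))) := by
  rcases T.eq_empty_or_nonempty with rfl | ⟨g₀, hg₀⟩
  · have : Subsingleton (Fin n) := ⟨fun x y => by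
      obtain ⟨g, hg, rfl⟩ := hconn x y
      simp_all⟩
    exact Subsingleton.elim _ _
  obtain ⟨P, -, hcover, -, hmeet⟩ := hbalanced
  have horbits : ∀ O ∈ cycleSupports T, ∃ O' ∈ cycleSupports T, O' ≠ O ∧ (O ∩ O').Nonempty := by
    simp only [cycleSupports, ← hcover, Set.mem_iUnion]
    rintro O ⟨i, hO⟩
    obtain ⟨O', hO', hne⟩ := hmeet i O hO
    exact ⟨O', ⟨i, hO'⟩, hne⟩
  have hsign : sign g₀ = -1 := sign_eq_neg_one_of_odd (by rwa [htype g₀ hg₀])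
  refine eq_top_of_alternatingGroup_le ?_ (subset_closure hg₀) hsign
  exact alternatingGroup_le_closure hconn
    (fun g hg u hu => exists_support_inter_eq_singleton hsplit horbits hg hu) hg₀
    (fun h => by simp [h] at hsign)

/-- Let `A` be a nonempty multiset of integers `≥ 2` with
`c(A) = Σ (a_i − 1)` odd. Any subset `T` of the extended conjugacy class `C(A)`
in `S_n` that is semi-connected, split, and balanced generates `S_n`.
The orbits of an element `g` of `C(A)` are the supports of its disjoint cycles,
here realized as the sets `(g.cycleOf x).support` for `x` moved by `g`;
balanced means the collection of all orbits of elements of `T` can be split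
into `|A|` pairwise disjoint sets, within each of which all orbits have the
same size and each orbit meets at least one other orbit. -/
theorem stmt_11 (n : ℕ) (A : Multiset ℕ) (hA : A ≠ 0) (hA2 : ∀ a ∈ A, 2 ≤ a)
    (hodd : Odd (A.sum - Multiset.card A))
    (T : Set (Equiv.Perm (Fin n)))
    (htype : ∀ g ∈ T, g.cycleType = A)
    (hconn : ∀ x y : Fin n, ∃ g ∈ Subgroup.closure T, g x = y)
    (hsplit : ∀ g ∈ T, ∀ h ∈ T, g ≠ h → (g.support ∩ h.support).card ≤ 1)
    (hbalanced : ∃ P : Fin (Multiset.card A) → Set (Finset (Fin n)),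
      (∀ i j, i ≠ j → Disjoint (P i) (P j)) ∧
      (⋃ i, P i) = {O : Finset (Fin n) | ∃ g ∈ T, ∃ x : Fin n,
          g x ≠ x ∧ O = (g.cycleOf x).support} ∧
      (∀ i, ∃ s : ℕ, ∀ O ∈ P i, O.card = s) ∧
      (∀ i, ∀ O ∈ P i, ∃ O' ∈ P i, O' ≠ O ∧ (O ∩ O').Nonempty)) :
    Subgroup.closure T = (⊤ : Subgroup (Equiv.Perm (Fin n))) :=
  stmt_11_general n A hodd T htype hconn hsplit hbalanced
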